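/- Pathwise convergence of square roots of Cox–Ingersoll–Ross paths to a reflected Ornstein–Uhlenbeck path (deterministic form of the paper's Theorem 2, sequence version): let y₀, b, σ > 0, and let B : [0,∞) → ℝ be continuous with B(0) = 0 and locally Hölder continuous, i.e. there exists λ ∈ (0,1) such that for every T > 0 there is Λ_T ≥ 0 with |B(t) − B(s)| ≤ Λ_T·|t − s|^λ for all s, t ∈ [0,T]. Let (εₙ)ₙ be a strictly decreasing sequence of positive reals with εₙ → 0, and for each n let Yₙ : [0,∞) → ℝ be continuous, strictly positive, and solve E(εₙ). Then: (1) for every t ≥ 0 the limit Y(t) := limₙ Yₙ(t) exists, is finite and nonnegative; (2) there is a function L : [0,∞) → ℝ, namely L(t) = limₙ (1/2)·∫₀ᵗ εₙ/Yₙ(s) ds, which is a reflection function for Y, and Y(t) = y₀ − (b/2)·∫₀ᵗ Y(s) ds + (σ/2)·B(t) + L(t) for all t ≥ 0; (3) for every T > 0, sup_{t∈[0,T]} |Y(t) − Yₙ(t)| → 0 and sup_{t∈[0,T]} |L(t) − (1/2)·∫₀ᵗ εₙ/Yₙ(s) ds| → 0 as n → ∞. -/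

import Mathlib

/-!
Larger `ε` gives larger solutions: at the last time before `t` at which the solution with the
larger parameter is still on top, the difference of the two drifts is nonnegative from then on.
So `Yₙ` decreases to `Y := infₙ Yₙ ≥ 0`. After the last time at which `Yₙ ≤ Yₙ(s) + δ` the
singular drift is at most `εₙ/δ`, which bounds the oscillation of `Yₙ` on `[s, t]` by that of `B`,
the linear drift, `δ` and `εₙ(t - s)/(2δ)`; letting `n → ∞` and then `δ → 0` shows that `Y` is
continuous, and Dini's theorem makes the convergence locally uniform. The approximate local times
`½∫₀ᵗ εₙ/Yₙ` equal `Yₙ + (b/2)∫₀ᵗ Yₙ - y₀ - (σ/2)B`, so they converge locally uniformly to the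
same expression `L` in `Y`; `L` is nondecreasing as a limit of nondecreasing functions, and where
`Y ≥ m > 0` its increments are bounded by `εₙ(t - s)/(2m) → 0`.
-/

/-- `L` is a reflection function for `Y` on `[0, ∞)`: `L` is continuous, nondecreasing,
`L 0 = 0`, and `L` grows only at zeros of `Y`. -/
def IsReflectionFn (L Y : ℝ → ℝ) : Prop :=
  ContinuousOn L (Set.Ici 0) ∧ MonotoneOn L (Set.Ici 0) ∧ L 0 = 0 ∧
    ∀ s t : ℝ, 0 ≤ s → s ≤ t → (∀ u ∈ Set.Icc s t, 0 < Y u) → L t = L s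

/-- A continuous, strictly positive `Y : [0, ∞) → ℝ` solves the singular equation `E(ε)`
if `Y t = y₀ + (1/2) ∫₀ᵗ (ε / Y s - b * Y s) ds + (σ/2) B t` for all `t ≥ 0`. -/
def SolvesE (y₀ b σ : ℝ) (B : ℝ → ℝ) (ε : ℝ) (Y : ℝ → ℝ) : Prop :=
  ContinuousOn Y (Set.Ici 0) ∧ (∀ t, 0 ≤ t → 0 < Y t) ∧
    ∀ t, 0 ≤ t →
      Y t = y₀ + (1 / 2) * (∫ s in (0:ℝ)..t, (ε / Y s - b * Y s)) + (σ / 2) * B t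

open MeasureTheory Filter Set intervalIntegral Topology

theorem exists_mem_Icc_forall_Ioc_lt {f : ℝ → ℝ} {a b : ℝ} (c : ℝ) (hab : a ≤ b)
    (hf : ContinuousOn f (Icc a b)) :
    ∃ u ∈ Icc a b, (u = a ∨ f u ≤ c) ∧ ∀ x ∈ Ioc u b, c < f x := by
  have hS : IsCompact (insert a (Icc a b ∩ f ⁻¹' Iic c)) := by
    refine isCompact_Icc.of_isClosed_subset ?_ (insert_subset ⟨le_rfl, hab⟩ inter_subset_left)
    rw [insert_eq]
    exact isClosed_singleton.union (hf.preimage_isClosed_of_isClosed isClosed_Icc isClosed_Iic)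
  obtain ⟨u, hu, hmax⟩ := hS.exists_isGreatest (insert_nonempty _ _)
  have huIcc : u ∈ Icc a b := by
    rcases hu with rfl | hu
    exacts [⟨le_rfl, hab⟩, hu.1]
  refine ⟨u, huIcc, hu.imp id (·.2), fun x hx => ?_⟩
  by_contra! hfx
  exact hx.1.not_ge (hmax (Or.inr ⟨⟨huIcc.1.trans hx.1.le, hx.2⟩, hfx⟩))

theorem div_two_mul_le_of_abs_le {σ x K : ℝ} (hx : |x| ≤ K) : σ / 2 * x ≤ |σ| / 2 * K :=
  calc σ / 2 * x ≤ |σ / 2 * x| := le_abs_self _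
    _ = |σ| / 2 * |x| := by rw [abs_mul, abs_div, abs_two]
    _ ≤ |σ| / 2 * K := by gcongr

theorem uIcc_subset_Ici {a b c : ℝ} (ha : c ≤ a) (hb : c ≤ b) : uIcc a b ⊆ Ici c :=
  fun _ hx => (le_min ha hb).trans hx.1

theorem ContinuousOn.Ici_of_forall_Icc {f : ℝ → ℝ} {a : ℝ}
    (h : ∀ T, a < T → ContinuousOn f (Icc a T)) : ContinuousOn f (Ici a) := fun x hx =>
  (h (x + 1) (by linarith [mem_Ici.1 hx]) x ⟨hx, by linarith⟩).mono_of_mem_nhdsWithin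
    (inter_mem_nhdsWithin _ (Iic_mem_nhds (lt_add_one x)))

theorem TendstoUniformlyOn.primitive {ι : Type*} {l : Filter ι} {F : ι → ℝ → ℝ}
    {f : ℝ → ℝ} {a T : ℝ} (hF : ∀ i, ContinuousOn (F i) (Icc a T)) (hf : ContinuousOn f (Icc a T))
    (h : TendstoUniformlyOn F f l (Icc a T)) :
    TendstoUniformlyOn (fun i t => ∫ s in a..t, F i s) (fun t => ∫ s in a..t, f s) l (Icc a T) := by
  rw [Metric.tendstoUniformlyOn_iff] at h ⊢
  intro e he
  filter_upwards [h (e / (|T - a| + 1)) (by positivity)] with i hi t ht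
  have hsub : uIcc a t ⊆ Icc a T := by
    rw [uIcc_of_le ht.1]; exact Icc_subset_Icc_right ht.2
  rw [dist_eq_norm, ← integral_sub ((hf.mono hsub).intervalIntegrable)
    ((hF i).mono hsub).intervalIntegrable]
  calc ‖∫ s in a..t, f s - F i s‖ ≤ e / (|T - a| + 1) * |t - a| :=
        norm_integral_le_of_norm_le_const fun s hs => by
          rw [uIoc_of_le ht.1] at hs
          exact (hi s ⟨hs.1.le, hs.2.trans ht.2⟩).le
    _ < e := by
        have hta : |t - a| ≤ |T - a| :=
          abs_le_abs_of_nonneg (sub_nonneg.2 ht.1) (by linarith [ht.2])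
        rw [div_mul_eq_mul_div, div_lt_iff₀ (by positivity)]
        nlinarith

noncomputable def approxLocalTime (ε : ℝ) (Z : ℝ → ℝ) (t : ℝ) : ℝ :=
  1 / 2 * ∫ s in (0:ℝ)..t, ε / Z s

noncomputable def reflectionTerm (y₀ b σ : ℝ) (B Y : ℝ → ℝ) (t : ℝ) : ℝ :=
  Y t + b / 2 * (∫ s in (0:ℝ)..t, Y s) - (y₀ + σ / 2 * B t)

namespace SolvesE

variable {y₀ b σ ε : ℝ} {B Z : ℝ → ℝ} {a s t : ℝ}

theorem intervalIntegrable (h : SolvesE y₀ b σ B ε Z) (ha : 0 ≤ a) (ht : 0 ≤ t) :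
    IntervalIntegrable Z volume a t :=
  (h.1.mono (uIcc_subset_Ici ha ht)).intervalIntegrable

theorem intervalIntegrable_div (h : SolvesE y₀ b σ B ε Z) (ha : 0 ≤ a) (ht : 0 ≤ t) :
    IntervalIntegrable (fun s => ε / Z s) volume a t :=
  (continuousOn_const.div (h.1.mono (uIcc_subset_Ici ha ht))
    fun x hx => (h.2.1 x (uIcc_subset_Ici ha ht hx)).ne').intervalIntegrable

theorem approxLocalTime_eq (h : SolvesE y₀ b σ B ε Z) (ht : 0 ≤ t) :
    approxLocalTime ε Z t = reflectionTerm y₀ b σ B Z t := by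
  have heq := h.2.2 t ht
  rw [integral_sub (h.intervalIntegrable_div le_rfl ht)
    ((h.intervalIntegrable le_rfl ht).const_mul b), intervalIntegral.integral_const_mul] at heq
  rw [approxLocalTime, reflectionTerm, heq]
  ring

theorem apply_zero (h : SolvesE y₀ b σ B ε Z) : Z 0 = y₀ + σ / 2 * B 0 := by
  simpa using h.2.2 0 le_rfl

theorem approxLocalTime_sub (h : SolvesE y₀ b σ B ε Z) (ha : 0 ≤ a) (ht : 0 ≤ t) :
    approxLocalTime ε Z t - approxLocalTime ε Z a = 1 / 2 * ∫ s in a..t, ε / Z s := by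
  rw [approxLocalTime, approxLocalTime, ← mul_sub,
    integral_interval_sub_left (h.intervalIntegrable_div le_rfl ht)
      (h.intervalIntegrable_div le_rfl ha)]

theorem sub_eq (h : SolvesE y₀ b σ B ε Z) (ha : 0 ≤ a) (ht : 0 ≤ t) :
    Z t - Z a = 1 / 2 * (∫ s in a..t, ε / Z s) - b / 2 * (∫ s in a..t, Z s)
      + σ / 2 * (B t - B a) := by
  have hL := h.approxLocalTime_sub ha ht
  rw [h.approxLocalTime_eq ht, h.approxLocalTime_eq ha, reflectionTerm, reflectionTerm] at hL
  rw [← hL, ← integral_interval_sub_left (h.intervalIntegrable le_rfl ht)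
    (h.intervalIntegrable le_rfl ha)]
  ring

theorem integral_div_nonneg (h : SolvesE y₀ b σ B ε Z) (hε : 0 ≤ ε) (ha : 0 ≤ a) (hat : a ≤ t) :
    0 ≤ ∫ s in a..t, ε / Z s :=
  integral_nonneg hat fun x hx => div_nonneg hε (h.2.1 x (ha.trans hx.1)).le

theorem monotoneOn_approxLocalTime (h : SolvesE y₀ b σ B ε Z) (hε : 0 ≤ ε) :
    MonotoneOn (approxLocalTime ε Z) (Ici 0) := fun a ha t ht hat => by
  have := h.approxLocalTime_sub ha ht
  have := h.integral_div_nonneg hε ha hat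
  linarith

theorem approxLocalTime_sub_le (h : SolvesE y₀ b σ B ε Z) (hε : 0 ≤ ε) (ha : 0 ≤ a)
    (hat : a ≤ t) {m : ℝ} (hm : 0 < m) (hZ : ∀ u ∈ Icc a t, m ≤ Z u) :
    approxLocalTime ε Z t - approxLocalTime ε Z a ≤ ε / m / 2 * (t - a) := by
  have hle : ∫ s in a..t, ε / Z s ≤ ∫ s in a..t, ε / m :=
    integral_mono_on hat (h.intervalIntegrable_div ha (ha.trans hat)) intervalIntegrable_const
      fun u hu => div_le_div_of_nonneg_left hε hm (hZ u hu)
  rw [h.approxLocalTime_sub ha (ha.trans hat)]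
  rw [intervalIntegral.integral_const, smul_eq_mul] at hle
  linarith

theorem apply_le_of_le {ε' : ℝ} {Z' : ℝ → ℝ} (h : SolvesE y₀ b σ B ε Z)
    (h' : SolvesE y₀ b σ B ε' Z') (hb : 0 ≤ b) (hε' : 0 ≤ ε') (hεε' : ε' ≤ ε) (ht : 0 ≤ t) :
    Z' t ≤ Z t := by
  obtain ⟨u, hu, hZu, hlt⟩ := exists_mem_Icc_forall_Ioc_lt (f := fun x => Z' x - Z x) 0 ht
    ((h'.1.sub h.1).mono fun x hx => hx.1)
  have hu0 : 0 ≤ u := hu.1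
  replace hZu : Z' u ≤ Z u := by
    rcases hZu with rfl | hZu
    · rw [h.apply_zero, h'.apply_zero]
    · linarith
  rcases hu.2.eq_or_lt with rfl | hut
  · exact hZu
  have hZt := hlt t ⟨hut, le_rfl⟩
  have hdiv : ∫ s in u..t, ε' / Z' s ≤ ∫ s in u..t, ε / Z s :=
    integral_mono_on_of_le_Ioo hu.2 (h'.intervalIntegrable_div hu0 ht)
      (h.intervalIntegrable_div hu0 ht) fun x hx => by
        have hZx := h.2.1 x (hu0.trans hx.1.le)
        have := hlt x ⟨hx.1, hx.2.le⟩
        calc ε' / Z' x ≤ ε' / Z x := div_le_div_of_nonneg_left hε' hZx (by linarith)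
          _ ≤ ε / Z x := by gcongr
  have hZZ : ∫ s in u..t, Z s ≤ ∫ s in u..t, Z' s :=
    integral_mono_on_of_le_Ioo hu.2 (h.intervalIntegrable hu0 ht) (h'.intervalIntegrable hu0 ht)
      fun x hx => by linarith [hlt x ⟨hx.1, hx.2.le⟩]
  have := mul_le_mul_of_nonneg_left hZZ hb
  have := h.sub_eq hu0 ht
  have := h'.sub_eq hu0 ht
  linarith

theorem decrease_le (h : SolvesE y₀ b σ B ε Z) (hb : 0 ≤ b) (hε : 0 ≤ ε) (hs : 0 ≤ s)
    (hst : s ≤ t) {M K : ℝ} (hM : ∀ u ∈ Icc s t, Z u ≤ M) (hK : ∀ u ∈ Icc s t, |B t - B u| ≤ K) :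
    Z s - Z t ≤ |σ| / 2 * K + b / 2 * M * (t - s) := by
  have ht := hs.trans hst
  have hZ : ∫ u in s..t, Z u ≤ M * (t - s) := by
    simpa [mul_comm] using integral_mono_on hst (h.intervalIntegrable hs ht)
      intervalIntegrable_const hM
  have hB := div_two_mul_le_of_abs_le (σ := -σ) (hK s ⟨le_rfl, hst⟩)
  rw [abs_neg] at hB
  have := mul_le_mul_of_nonneg_left hZ hb
  have := h.sub_eq hs ht
  have := h.integral_div_nonneg hε hs hst
  linarith

theorem increase_le (h : SolvesE y₀ b σ B ε Z) (hb : 0 ≤ b) (hε : 0 ≤ ε) (hs : 0 ≤ s)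
    (hst : s ≤ t) {K δ : ℝ} (hK : ∀ u ∈ Icc s t, |B t - B u| ≤ K) (hδ : 0 < δ) :
    Z t - Z s ≤ |σ| / 2 * K + δ + ε * (t - s) / (2 * δ) := by
  have ht := hs.trans hst
  obtain ⟨u, hu, hZu, hlt⟩ := exists_mem_Icc_forall_Ioc_lt (Z s + δ) hst
    (h.1.mono fun x hx => hs.trans hx.1)
  have hu0 : 0 ≤ u := hs.trans hu.1
  replace hZu : Z u ≤ Z s + δ := by
    rcases hZu with rfl | hZu
    exacts [by linarith, hZu]
  have hdiv : ∫ x in u..t, ε / Z x ≤ ∫ x in u..t, ε / δ :=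
    integral_mono_on_of_le_Ioo hu.2 (h.intervalIntegrable_div hu0 ht) intervalIntegrable_const
      fun x hx => div_le_div_of_nonneg_left hε hδ
        (by linarith [hlt x ⟨hx.1, hx.2.le⟩, h.2.1 s hs])
  rw [intervalIntegral.integral_const, smul_eq_mul] at hdiv
  have hZ : 0 ≤ ∫ x in u..t, Z x :=
    integral_nonneg hu.2 fun x hx => (h.2.1 x (hu0.trans hx.1)).le
  have hB := div_two_mul_le_of_abs_le (σ := σ) (hK u hu)
  have hεδ : (t - u) * (ε / δ) ≤ (t - s) * (ε / δ) := by gcongr; exact hu.1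
  have hbZ : 0 ≤ b / 2 * ∫ x in u..t, Z x := by positivity
  have hrw : ε * (t - s) / (2 * δ) = (t - s) * (ε / δ) / 2 := by ring
  have := h.sub_eq hu0 ht
  linarith

end SolvesE

section Limit

variable {y₀ b σ : ℝ} {B Y : ℝ → ℝ} {εs : ℕ → ℝ} {Yn : ℕ → ℝ → ℝ}

theorem antitone_apply_of_solvesE (hb : 0 ≤ b) (hεpos : ∀ n, 0 ≤ εs n) (hεanti : Antitone εs)
    (hYn : ∀ n, SolvesE y₀ b σ B (εs n) (Yn n)) {t : ℝ} (ht : 0 ≤ t) :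
    Antitone fun n => Yn n t := fun m n hmn =>
  (hYn m).apply_le_of_le (hYn n) hb (hεpos n) (hεanti hmn) ht

theorem tendsto_iInf_of_solvesE (hb : 0 ≤ b) (hεpos : ∀ n, 0 ≤ εs n) (hεanti : Antitone εs)
    (hYn : ∀ n, SolvesE y₀ b σ B (εs n) (Yn n)) {t : ℝ} (ht : 0 ≤ t) :
    Tendsto (fun n => Yn n t) atTop (𝓝 (⨅ n, Yn n t)) :=
  tendsto_atTop_ciInf (antitone_apply_of_solvesE hb hεpos hεanti hYn ht)
    ⟨0, forall_mem_range.2 fun n => ((hYn n).2.1 t ht).le⟩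

theorem abs_sub_le_of_tendsto (hb : 0 ≤ b) (hεpos : ∀ n, 0 ≤ εs n)
    (hεlim : Tendsto εs atTop (𝓝 0)) (hYn : ∀ n, SolvesE y₀ b σ B (εs n) (Yn n))
    (hlim : ∀ t, 0 ≤ t → Tendsto (fun n => Yn n t) atTop (𝓝 (Y t))) {s t M K : ℝ}
    (hs : 0 ≤ s) (hst : s ≤ t) (hM : ∀ n, ∀ u ∈ Icc s t, Yn n u ≤ M)
    (hK : ∀ u ∈ Icc s t, |B t - B u| ≤ K) :
    |Y t - Y s| ≤ |σ| / 2 * K + b / 2 * M * (t - s) := by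
  have hM0 : 0 ≤ M := ((hYn 0).2.1 s hs).le.trans (hM 0 s ⟨le_rfl, hst⟩)
  have hdrift : 0 ≤ b / 2 * M * (t - s) := mul_nonneg (by positivity) (sub_nonneg.2 hst)
  refine le_of_forall_pos_le_add fun δ hδ => ?_
  have hbound : ∀ n, |Yn n t - Yn n s|
      ≤ |σ| / 2 * K + b / 2 * M * (t - s) + δ + εs n * (t - s) / (2 * δ) := fun n => by
    have := (hYn n).increase_le hb (hεpos n) hs hst hK hδ
    have := (hYn n).decrease_le hb (hεpos n) hs hst (hM n) hK
    have : 0 ≤ δ + εs n * (t - s) / (2 * δ) := by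
      have := hεpos n
      have := sub_nonneg.2 hst
      positivity
    rw [abs_sub_le_iff]
    constructor <;> linarith
  have hrhs : Tendsto (fun n => |σ| / 2 * K + b / 2 * M * (t - s) + δ + εs n * (t - s) / (2 * δ))
      atTop (𝓝 (|σ| / 2 * K + b / 2 * M * (t - s) + δ)) := by
    simpa using tendsto_const_nhds.add ((hεlim.mul_const (t - s)).div_const (2 * δ))
  exact le_of_tendsto_of_tendsto' ((hlim t (hs.trans hst)).sub (hlim s hs)).abs hrhs hbound

theorem uniformContinuousOn_of_tendsto (hb : 0 ≤ b) (hεpos : ∀ n, 0 ≤ εs n)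
    (hεanti : Antitone εs) (hεlim : Tendsto εs atTop (𝓝 0))
    (hYn : ∀ n, SolvesE y₀ b σ B (εs n) (Yn n))
    (hlim : ∀ t, 0 ≤ t → Tendsto (fun n => Yn n t) atTop (𝓝 (Y t))) {T : ℝ}
    (hBc : ContinuousOn B (Icc 0 T)) : UniformContinuousOn Y (Icc 0 T) := by
  obtain ⟨C, hC⟩ := isCompact_Icc.exists_bound_of_continuousOn ((hYn 0).1.mono Icc_subset_Ici_self)
  have hM : ∀ n, ∀ u ∈ Icc 0 T, Yn n u ≤ |C| := fun n u hu =>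
    (antitone_apply_of_solvesE hb hεpos hεanti hYn hu.1 n.zero_le).trans
      ((le_abs_self _).trans ((hC u hu).trans (le_abs_self C)))
  have hBu := (isCompact_Icc.uniformContinuousOn_of_continuous hBc)
  rw [Metric.uniformContinuousOn_iff_le] at hBu ⊢
  intro e he
  obtain ⟨d, hd, hBd⟩ := hBu (e / (|σ| + 1)) (by positivity)
  have hkey : ∀ s ∈ Icc 0 T, ∀ t ∈ Icc 0 T, s ≤ t → t - s ≤ min d (e / (b * |C| + 1)) →
      |Y t - Y s| ≤ e := fun s hs t ht hst hts => by
    have hsub : Icc s t ⊆ Icc 0 T := Icc_subset_Icc hs.1 ht.2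
    have hK : ∀ u ∈ Icc s t, |B t - B u| ≤ e / (|σ| + 1) := fun u hu => by
      rw [← Real.dist_eq]
      refine hBd t ht u (hsub hu) ?_
      rw [Real.dist_eq, abs_of_nonneg (by linarith [hu.2])]
      linarith [hu.1, min_le_left d (e / (b * |C| + 1))]
    refine (abs_sub_le_of_tendsto hb hεpos hεlim hYn hlim hs.1 hst
      (fun n u hu => hM n u (hsub hu)) hK).trans ?_
    have h1 : |σ| / 2 * (e / (|σ| + 1)) ≤ e / 2 := by
      rw [div_mul_div_comm, div_le_div_iff₀ (by positivity) two_pos]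
      nlinarith [abs_nonneg σ]
    have h2 : b / 2 * |C| * (t - s) ≤ e / 2 := by
      have hts' : t - s ≤ e / (b * |C| + 1) := hts.trans (min_le_right _ _)
      rw [le_div_iff₀ (by positivity)] at hts'
      nlinarith [abs_nonneg C, mul_nonneg hb (abs_nonneg C), sub_nonneg.2 hst]
    linarith
  refine ⟨min d (e / (b * |C| + 1)), by positivity, fun x hx y hy hxy => ?_⟩
  rw [Real.dist_eq] at hxy ⊢
  rcases le_total x y with h | h
  · rw [abs_sub_comm] at hxy ⊢
    exact hkey x hx y hy h ((le_abs_self _).trans hxy)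
  · exact hkey y hy x hx h ((le_abs_self _).trans hxy)

theorem tendstoUniformlyOn_reflectionTerm {ι : Type*} {l : Filter ι} {Zn : ι → ℝ → ℝ} {T : ℝ}
    (hZn : ∀ i, ContinuousOn (Zn i) (Icc 0 T)) (hY : ContinuousOn Y (Icc 0 T))
    (h : TendstoUniformlyOn Zn Y l (Icc 0 T)) :
    TendstoUniformlyOn (fun i => reflectionTerm y₀ b σ B (Zn i)) (reflectionTerm y₀ b σ B Y) l
      (Icc 0 T) := by
  have hsum := h.add ((uniformContinuous_mul_left' (b / 2)).comp_tendstoUniformlyOn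
    (h.primitive hZn hY))
  rw [Metric.tendstoUniformlyOn_iff] at hsum ⊢
  intro e he
  filter_upwards [hsum e he] with i hi t ht
  simpa only [reflectionTerm, dist_sub_right, Pi.add_apply, Function.comp_apply] using hi t ht

theorem continuousOn_reflectionTerm (hY : ContinuousOn Y (Ici 0)) (hB : ContinuousOn B (Ici 0)) :
    ContinuousOn (reflectionTerm y₀ b σ B Y) (Ici 0) := by
  refine ContinuousOn.Ici_of_forall_Icc fun T hT => ?_
  have hprim : ContinuousOn (fun t => ∫ s in (0:ℝ)..t, Y s) (Icc 0 T) := by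
    rw [← uIcc_of_le hT.le]
    exact continuousOn_primitive_interval'
      (hY.mono (uIcc_subset_Ici le_rfl hT.le)).intervalIntegrable left_mem_uIcc
  exact ((hY.mono Icc_subset_Ici_self).add (continuousOn_const.mul hprim)).sub
    (continuousOn_const.add (continuousOn_const.mul (hB.mono Icc_subset_Ici_self)))

theorem isReflectionFn_of_tendsto {L : ℝ → ℝ} (hεpos : ∀ n, 0 ≤ εs n)
    (hεlim : Tendsto εs atTop (𝓝 0)) (hYn : ∀ n, SolvesE y₀ b σ B (εs n) (Yn n))
    (hY : ContinuousOn Y (Ici 0)) (hYle : ∀ n t, 0 ≤ t → Y t ≤ Yn n t)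
    (hL : ∀ t, 0 ≤ t → Tendsto (fun n => approxLocalTime (εs n) (Yn n) t) atTop (𝓝 (L t)))
    (hLc : ContinuousOn L (Ici 0)) (hL0 : L 0 = 0) : IsReflectionFn L Y := by
  have hmono : MonotoneOn L (Ici 0) := fun s hs t ht hst =>
    le_of_tendsto_of_tendsto' (hL s hs) (hL t ht) fun n =>
      (hYn n).monotoneOn_approxLocalTime (hεpos n) hs ht hst
  refine ⟨hLc, hmono, hL0, fun s t hs hst hpos => ?_⟩
  obtain ⟨m, hm, hmin⟩ := isCompact_Icc.exists_isMinOn ⟨s, le_rfl, hst⟩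
    (hY.mono fun u hu => hs.trans hu.1)
  have hsub : Tendsto (fun n => approxLocalTime (εs n) (Yn n) t - approxLocalTime (εs n) (Yn n) s)
      atTop (𝓝 (L t - L s)) := (hL t (hs.trans hst)).sub (hL s hs)
  have hbound : Tendsto (fun n => εs n / Y m / 2 * (t - s)) atTop (𝓝 0) := by
    simpa using ((hεlim.div_const (Y m)).div_const 2).mul_const (t - s)
  have hle : L t - L s ≤ 0 := le_of_tendsto_of_tendsto' hsub hbound fun n =>
    (hYn n).approxLocalTime_sub_le (hεpos n) hs hst (hpos m hm) fun u hu =>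
      (hmin hu).trans (hYle n u (hs.trans hu.1))
  linarith [hmono hs (hs.trans hst) hst]

end Limit

theorem stmt_11_general (y₀ b σ : ℝ) (hb : 0 < b)
    (B : ℝ → ℝ) (hBc : ContinuousOn B (Set.Ici 0))
    (εs : ℕ → ℝ) (hεpos : ∀ n, 0 < εs n) (hεdec : StrictAnti εs)
    (hεlim : Filter.Tendsto εs Filter.atTop (nhds 0))
    (Yn : ℕ → ℝ → ℝ) (hYn : ∀ n, SolvesE y₀ b σ B (εs n) (Yn n)) :
    ∃ Y L : ℝ → ℝ,
      (∀ t, 0 ≤ t →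
        (0 ≤ Y t ∧ Filter.Tendsto (fun n => Yn n t) Filter.atTop (nhds (Y t))) ∧
        Filter.Tendsto (fun n => (1 / 2) * ∫ s in (0:ℝ)..t, εs n / Yn n s)
          Filter.atTop (nhds (L t))) ∧
      IsReflectionFn L Y ∧
      (∀ t, 0 ≤ t →
        Y t = y₀ - (b / 2) * (∫ s in (0:ℝ)..t, Y s) + (σ / 2) * B t + L t) ∧
      (∀ T, 0 < T →
        TendstoUniformlyOn (fun n => Yn n) Y Filter.atTop (Set.Icc 0 T) ∧
        TendstoUniformlyOn (fun n t => (1 / 2) * ∫ s in (0:ℝ)..t, εs n / Yn n s) L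
          Filter.atTop (Set.Icc 0 T)) := by
  have hε n : 0 ≤ εs n := (hεpos n).le
  have hanti t (ht : 0 ≤ t) := antitone_apply_of_solvesE hb.le hε hεdec.antitone hYn ht
  set Y : ℝ → ℝ := fun t => ⨅ n, Yn n t
  have hYlim t (ht : 0 ≤ t) : Tendsto (fun n => Yn n t) atTop (𝓝 (Y t)) :=
    tendsto_iInf_of_solvesE hb.le hε hεdec.antitone hYn ht
  have hY0 : Y 0 = y₀ + σ / 2 * B 0 := tendsto_nhds_unique (hYlim 0 le_rfl) <| by
    simp only [(hYn _).apply_zero, tendsto_const_nhds]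
  have hYc : ContinuousOn Y (Ici 0) := ContinuousOn.Ici_of_forall_Icc fun T _ =>
    (uniformContinuousOn_of_tendsto hb.le hε hεdec.antitone hεlim hYn hYlim
      (hBc.mono Icc_subset_Ici_self)).continuousOn
  have hYunif T : TendstoUniformlyOn Yn Y atTop (Icc 0 T) :=
    Antitone.tendstoUniformlyOn_of_forall_tendsto isCompact_Icc
      (fun n => (hYn n).1.mono Icc_subset_Ici_self) (fun t ht => hanti t ht.1)
      (hYc.mono Icc_subset_Ici_self) fun t ht => hYlim t ht.1
  have hLunif T : TendstoUniformlyOn (fun n => approxLocalTime (εs n) (Yn n))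
      (reflectionTerm y₀ b σ B Y) atTop (Icc 0 T) :=
    (tendstoUniformlyOn_reflectionTerm (fun n => (hYn n).1.mono Icc_subset_Ici_self)
      (hYc.mono Icc_subset_Ici_self) (hYunif T)).congr
      (Eventually.of_forall fun n t ht => ((hYn n).approxLocalTime_eq ht.1).symm)
  have hLlim t (ht : 0 ≤ t) := (hLunif t).tendsto_at ⟨ht, le_rfl⟩
  have hYnonneg t (ht : 0 ≤ t) : 0 ≤ Y t :=
    ge_of_tendsto' (hYlim t ht) fun n => ((hYn n).2.1 t ht).le
  have hYle n t (ht : 0 ≤ t) : Y t ≤ Yn n t := (hanti t ht).le_of_tendsto (hYlim t ht) n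
  have hL0 : reflectionTerm y₀ b σ B Y 0 = 0 := by simp [reflectionTerm, hY0]
  refine ⟨Y, reflectionTerm y₀ b σ B Y, fun t ht => ⟨⟨hYnonneg t ht, hYlim t ht⟩, hLlim t ht⟩,
    isReflectionFn_of_tendsto hε hεlim hYn hYc hYle hLlim (continuousOn_reflectionTerm hYc hBc) hL0,
    fun t _ => by rw [reflectionTerm]; ring, fun T _ => ⟨hYunif T, hLunif T⟩⟩

/-- Pathwise convergence of square roots of CIR paths to a reflected OU path
(deterministic form of the paper's Theorem 2, sequence version). -/
theorem stmt_11 (y₀ b σ : ℝ) (hy₀ : 0 < y₀) (hb : 0 < b) (hσ : 0 < σ)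
    (B : ℝ → ℝ) (hBc : ContinuousOn B (Set.Ici 0)) (hB0 : B 0 = 0)
    (hHol : ∃ lam : ℝ, 0 < lam ∧ lam < 1 ∧ ∀ T, 0 < T → ∃ Λ, 0 ≤ Λ ∧
      ∀ s ∈ Set.Icc (0:ℝ) T, ∀ t ∈ Set.Icc (0:ℝ) T, |B t - B s| ≤ Λ * |t - s| ^ lam)
    (εs : ℕ → ℝ) (hεpos : ∀ n, 0 < εs n) (hεdec : StrictAnti εs)
    (hεlim : Filter.Tendsto εs Filter.atTop (nhds 0))
    (Yn : ℕ → ℝ → ℝ) (hYn : ∀ n, SolvesE y₀ b σ B (εs n) (Yn n)) :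
    ∃ Y L : ℝ → ℝ,
      (∀ t, 0 ≤ t →
        (0 ≤ Y t ∧ Filter.Tendsto (fun n => Yn n t) Filter.atTop (nhds (Y t))) ∧
        Filter.Tendsto (fun n => (1 / 2) * ∫ s in (0:ℝ)..t, εs n / Yn n s)
          Filter.atTop (nhds (L t))) ∧
      IsReflectionFn L Y ∧
      (∀ t, 0 ≤ t →
        Y t = y₀ - (b / 2) * (∫ s in (0:ℝ)..t, Y s) + (σ / 2) * B t + L t) ∧
      (∀ T, 0 < T →
        TendstoUniformlyOn (fun n => Yn n) Y Filter.atTop (Set.Icc 0 T) ∧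
        TendstoUniformlyOn (fun n t => (1 / 2) * ∫ s in (0:ℝ)..t, εs n / Yn n s) L
          Filter.atTop (Set.Icc 0 T)) :=
  stmt_11_general y₀ b σ hb B hBc εs hεpos hεdec hεlim Yn hYn
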